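/- arXiv:2310.18855 — 2 statements merged into one kernel-verified Lean document; each statement's English description precedes it below -/
import Mathlib

section
/- Let X = X(𝒢) be a coded shift such that 𝒢 uniquely represents X_seq. Then for every finite word w over the alphabet, the set [w]_seq := [w] ∩ X_seq is a countable union of shifted 𝒢-cylinders, i.e. of sets of the form σ^l⟦g_0⋯g_k⟧ with g_0,…,g_k ∈ 𝒢 and l ∈ ℤ. -/
open MeasureTheory Filter Set
open scoped ENNReal NNReal

noncomputable section

namespace Coded

variable {A : Type*}

/-- The left shift map on bi-infinite sequences. -/
def shift (x : ℤ → A) : ℤ → A := fun n => x (n + 1)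

/-- The shift by `m` steps, `σ^m`. -/
def shiftBy (m : ℤ) (x : ℤ → A) : ℤ → A := fun n => x (n + m)

/-- The word `x[a,b)` read off a bi-infinite sequence. -/
def extract (x : ℤ → A) (a b : ℤ) : List A :=
  (List.range (b - a).toNat).map fun j => x (a + (j : ℤ))

/-- `k` is a cut sequence presenting `x` as a bi-infinite concatenation of words of `G`. -/
def IsRepresentation (G : Set (List A)) (x : ℤ → A) (k : ℤ → ℤ) : Prop :=
  StrictMono k ∧ ∀ i : ℤ, extract x (k i) (k (i + 1)) ∈ G

/-- The sequential set `X_seq(G)`: all bi-infinite concatenations of words from `G`. -/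
def Xseq (G : Set (List A)) : Set (ℤ → A) :=
  {x | ∃ k : ℤ → ℤ, IsRepresentation G x k}

/-- `G` uniquely represents `X_seq(G)`: the cut sequence of any point of `X_seq(G)` is
unique up to enumeration, i.e. its range (the set of cut positions) is unique. -/
def UniquelyRepresents (G : Set (List A)) : Prop :=
  ∀ x : ℤ → A, ∀ k k' : ℤ → ℤ,
    IsRepresentation G x k → IsRepresentation G x k' → Set.range k = Set.range k'

/-- The cylinder set of a word `w` placed at position `0`. -/
def listCylinder (w : List A) : Set (ℤ → A) := {x | extract x 0 w.length = w}

/-- The word `w` occurs somewhere in `x`. -/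
def listOccursIn (w : List A) (x : ℤ → A) : Prop :=
  ∃ k : ℤ, extract x k (k + w.length) = w

/-- The words of length `n` occurring in points of `X`. -/
def langN (X : Set (ℤ → A)) (n : ℕ) : Set (List A) :=
  {w | w.length = n ∧ ∃ x ∈ X, listOccursIn w x}

/-- The language of `X`: all finite words occurring in points of `X`. -/
def langL (X : Set (ℤ → A)) : Set (List A) := {w | ∃ x ∈ X, listOccursIn w x}

/-- Exponential growth rate of the language of `X`; for a shift space `X` this is the
topological entropy `h_top(X)`. -/
def hSet (X : Set (ℤ → A)) : ℝ :=
  Filter.limsup (fun n : ℕ => Real.log ((langN X n).ncard) / (n : ℝ)) Filter.atTop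

/-- The entropy `h(G)` of a generating set `G`. -/
def hGen (G : Set (List A)) : ℝ :=
  Filter.limsup (fun n : ℕ => Real.log (({g ∈ G | g.length = n}).ncard) / (n : ℝ))
    Filter.atTop

section TopologySection
variable [TopologicalSpace A]

/-- The coded shift `X(G)`: the smallest shift space containing `X_seq(G)`,
i.e. the closure of the sequential set. -/
def codedShift (G : Set (List A)) : Set (ℤ → A) := closure (Xseq G)

/-- The residual set `X_res(G) = X(G) \ X_seq(G)`. -/
def Xres (G : Set (List A)) : Set (ℤ → A) := codedShift G \ Xseq G

/-- The limit set `X_lim(G)`: points all of whose central words are subwords of generators. -/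
def Xlim (G : Set (List A)) : Set (ℤ → A) :=
  {x | ∀ k : ℕ, ∃ g ∈ G, (extract x (-(k : ℤ)) ((k : ℤ) + 1)) <:+: g}

/-- A subshift: a closed shift-invariant subset of the full shift. -/
def IsSubshift (Z : Set (ℤ → A)) : Prop := IsClosed Z ∧ shift '' Z = Z

end TopologySection

section MeasureSection
variable [MeasurableSpace A]

/-- A shift-invariant Borel probability measure. -/
def InvProb (μ : Measure (ℤ → A)) : Prop :=
  IsProbabilityMeasure μ ∧ ∀ s : Set (ℤ → A), MeasurableSet s → μ (shift ⁻¹' s) = μ s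

/-- `μ ∈ M_σ(X)`: a shift-invariant Borel probability measure giving `X` full measure. -/
def MemM (X : Set (ℤ → A)) (μ : Measure (ℤ → A)) : Prop := InvProb μ ∧ μ X = 1

/-- The measure-theoretic (Kolmogorov–Sinai) entropy of a shift-invariant
probability measure, computed via cylinder sets. -/
def measEntropy (μ : Measure (ℤ → A)) : ℝ :=
  Filter.limsup
    (fun n : ℕ =>
      (∑' w : {l : List A // l.length = n},
          Real.negMulLog (μ (listCylinder (w : List A))).toReal) / (n : ℝ))
    Filter.atTop

/-- A measure of maximal entropy of `X`. -/
def IsMME (X : Set (ℤ → A)) (μ : Measure (ℤ → A)) : Prop :=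
  MemM X μ ∧ measEntropy μ = hSet X

variable [TopologicalSpace A]

/-- The sequential entropy `h_seq(X(G))`. -/
def hseq (G : Set (List A)) : ℝ :=
  sSup {h : ℝ | ∃ μ : Measure (ℤ → A),
    MemM (codedShift G) μ ∧ μ (Xseq G) = 1 ∧ measEntropy μ = h}

/-- The residual entropy `h_res(X(G))`. -/
def hres (G : Set (List A)) : ℝ :=
  sSup {h : ℝ | ∃ μ : Measure (ℤ → A),
    MemM (codedShift G) μ ∧ μ (Xres G) = 1 ∧ measEntropy μ = h}

end MeasureSection

/-- The `G`-cylinder `⟦g₀ ⋯ g_k⟧`: points of `X_seq(G)` whose representation has a cut at `0`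
followed by the generators `g₀, …, g_k`. -/
def Gcylinder (G : Set (List A)) (gs : List (List A)) : Set (ℤ → A) :=
  {x | ∃ k : ℤ → ℤ, IsRepresentation G x k ∧ k 0 = 0 ∧
      ∀ j : Fin gs.length, extract x (k ((j : ℕ) : ℤ)) (k (((j : ℕ) : ℤ) + 1)) = gs.get j}

/-- `E = ⋃_{g ∈ G} ⟦g⟧`. -/
def Eset (G : Set (List A)) : Set (ℤ → A) := ⋃ g ∈ G, Gcylinder G [g]

/-- The first return time to `E`. -/
def returnTime (E : Set (ℤ → A)) (x : ℤ → A) : ℕ := sInf {n : ℕ | 1 ≤ n ∧ shift^[n] x ∈ E}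

/-- The induced (first-return) map `σ_E`. -/
def inducedMap (E : Set (ℤ → A)) (x : ℤ → A) : ℤ → A := shift^[returnTime E x] x

section GBernoulli
variable [MeasurableSpace A]

/-- `μ` is `G`-Bernoulli with weights `p` and normalizing constant `c`. -/
def IsGBernoulliWith (G : Set (List A)) (μ : Measure (ℤ → A)) (p : List A → ℝ) (c : ℝ) :
    Prop :=
  (∀ g ∈ G, 0 < p g) ∧
  (∑' g : G, p (g : List A)) = 1 ∧
  Summable (fun g : G => ((g : List A).length : ℝ) * p (g : List A)) ∧
  (∑' g : G, ((g : List A).length : ℝ) * p (g : List A)) = c ∧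
  ∀ gs : List (List A), gs ≠ [] → (∀ g ∈ gs, g ∈ G) →
    (μ (Gcylinder G gs)).toReal = (1 / c) * (gs.map p).prod

/-- `μ` is `G`-Bernoulli. -/
def IsGBernoulli (G : Set (List A)) (μ : Measure (ℤ → A)) : Prop :=
  ∃ p c, IsGBernoulliWith G μ p c

end GBernoulli

end Coded

/-!
Take a representation of a point `x ∈ [w] ∩ X_seq` and cuts `k a ≤ 0` and `k b ≥ |w|`, `a < b`,
around the window of `w`. The generators between these cuts form a `G`-cylinder which, shifted
back, contains `x`, and all of whose points read `w` on `[0, |w|)` because they agree with `x` on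
`[k a, k b)`. Hence `[w]_seq` is the union of all shifted `G`-cylinders contained in it, and there
are only countably many pairs `(g₀ ⋯ g_k, l)`.
-/

namespace Coded

section

variable {A : Type*} {G : Set (List A)}

/-- `extract` elaborates to a map over `List.range` coerced to `List ℤ` through the list monad;
this is the form the lemmas below work with. -/
lemma extract_eq_map_range (x : ℤ → A) (a b : ℤ) :
    extract x a b = (List.range (b - a).toNat).map fun j : ℕ => x (a + j) := by
  simp [extract, ← List.map_eq_flatMap, Function.comp_def]

lemma length_extract (x : ℤ → A) (a b : ℤ) : (extract x a b).length = (b - a).toNat := by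
  simp [extract_eq_map_range]

lemma extract_eq_extract_iff {x y : ℤ → A} {a b : ℤ} :
    extract x a b = extract y a b ↔ ∀ n, a ≤ n → n < b → x n = y n := by
  rw [extract_eq_map_range, extract_eq_map_range, List.map_inj_left]
  simp only [List.mem_range]
  refine ⟨fun h n han hnb => ?_, fun h j hj => h _ (by omega) (by omega)⟩
  simpa [Int.toNat_of_nonneg (by omega : 0 ≤ n - a)] using h (n - a).toNat (by omega)

lemma extract_append (x : ℤ → A) {a b c : ℤ} (hab : a ≤ b) (hbc : b ≤ c) :
    extract x a b ++ extract x b c = extract x a c := by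
  simp only [extract_eq_map_range]
  rw [show (c - a).toNat = (b - a).toNat + (c - b).toNat by omega, List.range_add,
    List.map_append, List.map_map]
  congr 1
  refine List.map_congr_left fun j _ => ?_
  simp only [Function.comp_apply]
  congr 1
  omega

lemma extract_shiftBy (m : ℤ) (x : ℤ → A) (a b : ℤ) :
    extract (shiftBy m x) a b = extract x (a + m) (b + m) := by
  simp only [extract_eq_map_range, shiftBy, show b + m - (a + m) = b - a by ring]
  refine List.map_congr_left fun j _ => ?_
  congr 1
  ring

lemma shiftBy_neg_shiftBy (m : ℤ) (x : ℤ → A) : shiftBy (-m) (shiftBy m x) = x := by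
  funext n
  simp [shiftBy]

lemma add_natCast_le_of_strictMono {k : ℤ → ℤ} (hk : StrictMono k) (i : ℤ) (n : ℕ) :
    k i + n ≤ k (n + i) := by
  induction n with
  | zero => simp
  | succ n ih =>
    have := hk (show (n : ℤ) + i < (n + 1 : ℕ) + i by push_cast; omega)
    push_cast at ih this ⊢
    omega

lemma isRepresentation_shiftBy {x : ℤ → A} {k : ℤ → ℤ} (hk : IsRepresentation G x k)
    (m a : ℤ) : IsRepresentation G (shiftBy m x) fun i => k (i + a) - m := by
  refine ⟨fun i j hij => sub_lt_sub_right (hk.1 (by omega : i + a < j + a)) m, fun i => ?_⟩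
  simpa [extract_shiftBy, add_right_comm i 1 a] using hk.2 (i + a)

lemma shiftBy_mem_Xseq (m : ℤ) {x : ℤ → A} (hx : x ∈ Xseq G) : shiftBy m x ∈ Xseq G :=
  let ⟨_, hk⟩ := hx
  ⟨_, isRepresentation_shiftBy hk m 0⟩

lemma Gcylinder_subset_Xseq (gs : List (List A)) : Gcylinder G gs ⊆ Xseq G :=
  fun _ ⟨k, hk, _⟩ => ⟨k, hk⟩

def blocks (x : ℤ → A) (k : ℤ → ℤ) (n : ℕ) : List (List A) :=
  (List.range n).map fun j : ℕ => extract x (k j) (k ((j : ℤ) + 1))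

lemma length_blocks (x : ℤ → A) (k : ℤ → ℤ) (n : ℕ) : (blocks x k n).length = n := by
  simp [blocks]

lemma flatten_blocks (x : ℤ → A) {k : ℤ → ℤ} (hk : Monotone k) (n : ℕ) :
    (blocks x k n).flatten = extract x (k 0) (k n) := by
  induction n with
  | zero => simp [blocks, extract_eq_map_range]
  | succ n ih =>
    rw [blocks, List.range_succ, List.map_append, List.flatten_append, ← blocks, ih]
    simpa using extract_append x (hk (by omega : (0 : ℤ) ≤ n)) (hk (by omega : (n : ℤ) ≤ n + 1))

lemma eq_blocks_of_mem_Gcylinder {gs : List (List A)} {x : ℤ → A} {k : ℤ → ℤ}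
    (hgs : ∀ j : Fin gs.length, extract x (k ((j : ℕ) : ℤ)) (k (((j : ℕ) : ℤ) + 1)) = gs.get j) :
    gs = blocks x k gs.length :=
  List.ext_get (length_blocks x k _).symm fun j hj _ => by simpa [blocks] using (hgs ⟨j, hj⟩).symm

lemma length_flatten_blocks (x : ℤ → A) {k : ℤ → ℤ} (hk : Monotone k) (n : ℕ) :
    ((blocks x k n).flatten.length : ℤ) = k n - k 0 := by
  have := hk (Nat.cast_nonneg n : (0 : ℤ) ≤ n)
  rw [flatten_blocks x hk, length_extract]
  omega

lemma extract_flatten_of_mem_Gcylinder {gs : List (List A)} {x : ℤ → A}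
    (hx : x ∈ Gcylinder G gs) : extract x 0 gs.flatten.length = gs.flatten := by
  obtain ⟨k, hk, hk0, hgs⟩ := hx
  rw [eq_blocks_of_mem_Gcylinder hgs, length_flatten_blocks x hk.1.monotone,
    flatten_blocks x hk.1.monotone, hk0, sub_zero]

lemma mem_Gcylinder_blocks {x : ℤ → A} {k : ℤ → ℤ} (hk : IsRepresentation G x k) (hk0 : k 0 = 0)
    (n : ℕ) : x ∈ Gcylinder G (blocks x k n) :=
  ⟨k, hk, hk0, fun j => by rw [List.get_eq_getElem]; simp [blocks]⟩

lemma extract_eq_of_mem_Gcylinder_blocks {x y : ℤ → A} {k : ℤ → ℤ} (hk : Monotone k)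
    (hk0 : k 0 = 0) {n : ℕ} (hy : y ∈ Gcylinder G (blocks x k n)) :
    extract y 0 (k n) = extract x 0 (k n) := by
  have := extract_flatten_of_mem_Gcylinder hy
  rwa [length_flatten_blocks x hk, flatten_blocks x hk, hk0, sub_zero] at this

lemma exists_shiftBy_Gcylinder_extract_eq {x : ℤ → A} (hx : x ∈ Xseq G) (N : ℤ) :
    ∃ gs : List (List A), ∃ l : ℤ, (gs ≠ [] ∧ ∀ g ∈ gs, g ∈ G) ∧
      x ∈ shiftBy l '' Gcylinder G gs ∧
      ∀ z ∈ shiftBy l '' Gcylinder G gs, extract z 0 N = extract x 0 N := by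
  obtain ⟨k, hk⟩ := hx
  obtain ⟨a, hka⟩ : ∃ a, k a ≤ 0 := by
    refine ⟨-(k 0).toNat, ?_⟩
    have := add_natCast_le_of_strictMono hk.1 (-(k 0).toNat) (k 0).toNat
    rw [add_neg_cancel] at this
    omega
  obtain ⟨n, hn, hkn⟩ : ∃ n : ℕ, 0 < n ∧ N ≤ k (n + a) := by
    refine ⟨(N - k a).toNat + 1, by omega, ?_⟩
    have := add_natCast_le_of_strictMono hk.1 a ((N - k a).toNat + 1)
    omega
  set y := shiftBy (k a) x
  have hy := isRepresentation_shiftBy hk (k a) a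
  set k' : ℤ → ℤ := fun i => k (i + a) - k a
  have hk'0 : k' 0 = 0 := by simp [k']
  refine ⟨blocks y k' n, -k a, ⟨?_, ?_⟩, ⟨y, mem_Gcylinder_blocks hy hk'0 n, ?_⟩, ?_⟩
  · rwa [← List.length_pos_iff, length_blocks]
  · simp only [blocks, List.mem_map]
    rintro _ ⟨j, -, rfl⟩
    exact hy.2 j
  · exact shiftBy_neg_shiftBy _ x
  · rintro _ ⟨y', hy', rfl⟩
    have hagree := extract_eq_of_mem_Gcylinder_blocks hy.1.monotone hk'0 hy'
    rw [← shiftBy_neg_shiftBy (k a) x, extract_shiftBy, extract_shiftBy, extract_eq_extract_iff]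
    rw [extract_eq_extract_iff] at hagree
    intro m hm hmN
    exact hagree m (by omega) (by simp only [k']; omega)

end

theorem wcylinder_seq_union_general {A : Type*} [Fintype A]
    (G : Set (List A)) (w : List A) :
    ∃ S : Set (List (List A) × ℤ), S.Countable ∧
      (∀ p ∈ S, p.1 ≠ [] ∧ ∀ g ∈ p.1, g ∈ G) ∧
      listCylinder w ∩ Xseq G = ⋃ p ∈ S, shiftBy p.2 '' Gcylinder G p.1 := by
  refine ⟨{p | (p.1 ≠ [] ∧ ∀ g ∈ p.1, g ∈ G) ∧
      shiftBy p.2 '' Gcylinder G p.1 ⊆ listCylinder w ∩ Xseq G},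
    Set.to_countable _, fun p hp => hp.1, ?_⟩
  refine Subset.antisymm (fun x hx => ?_) (iUnion₂_subset fun p hp => hp.2)
  obtain ⟨gs, l, hgs, hxgs, hagree⟩ := exists_shiftBy_Gcylinder_extract_eq hx.2 w.length
  refine mem_iUnion₂.2 ⟨(gs, l), ⟨hgs, fun z hz => ⟨?_, ?_⟩⟩, hxgs⟩
  · exact (hagree z hz).trans hx.1
  · obtain ⟨y, hy, rfl⟩ := hz
    exact shiftBy_mem_Xseq l (Gcylinder_subset_Xseq gs hy)

/-- **Lemma.** If `G` uniquely represents `X_seq`, then for every finite word `w` the set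
`[w]_seq = [w] ∩ X_seq` is a countable union of shifted `G`-cylinders
`σ^l ⟦g₀ ⋯ g_k⟧` with `g₀, …, g_k ∈ G` and `l ∈ ℤ`. -/
theorem wcylinder_seq_union {A : Type*} [Fintype A]
    (G : Set (List A)) (hu : UniquelyRepresents G) (w : List A) :
    ∃ S : Set (List (List A) × ℤ), S.Countable ∧
      (∀ p ∈ S, p.1 ≠ [] ∧ ∀ g ∈ p.1, g ∈ G) ∧
      listCylinder w ∩ Xseq G = ⋃ p ∈ S, shiftBy p.2 '' Gcylinder G p.1 :=
  wcylinder_seq_union_general G w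

end Coded
end
end

section
/- Let X be a shift space over a finite alphabet and let Y ⊂ X be a shift-invariant (not necessarily closed) set. Then every shift-invariant Borel probability measure μ on X with μ(Y) = 1 satisfies h_σ(μ) ≤ h(Y), where h(Y) = limsup_{n→∞} (1/n) log |L_n(Y)| and L_n(Y) is the set of words of length n occurring in points of Y. -/
open MeasureTheory Filter Set
open scoped ENNReal NNReal

noncomputable section

/-!
Every cylinder `[w]` of a word `w ∉ L_n(Y)` is disjoint from `Y`, hence `μ`-null since `μ(Y) = 1`.
So the cylinder measures of length `n` form a probability vector supported on `L_n(Y)`, whose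
entropy is at most `log |L_n(Y)|` by Jensen's inequality for the concave `t ↦ -t log t`.
Dividing by `n` and passing to the `limsup` gives the claim.
-/

theorem Real.sum_negMulLog_le_log_card {ι : Type*} (s : Finset ι) {p : ι → ℝ}
    (hp : ∀ i ∈ s, 0 ≤ p i) (hsum : ∑ i ∈ s, p i = 1) :
    ∑ i ∈ s, Real.negMulLog (p i) ≤ Real.log s.card := by
  have hs : (0 : ℝ) < s.card :=
    Nat.cast_pos.2 (Finset.nonempty_of_sum_ne_zero (hsum ▸ one_ne_zero)).card_pos
  have jensen := Real.concaveOn_negMulLog.le_map_sum (t := s) (w := fun _ => (s.card : ℝ)⁻¹)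
    (fun _ _ => inv_nonneg.2 hs.le) (by simp [hs.ne']) hp
  simp only [smul_eq_mul, ← Finset.mul_sum, hsum, mul_one] at jensen
  rwa [Real.negMulLog, Real.log_inv, neg_mul_neg, mul_le_mul_iff_right₀ (inv_pos.2 hs)] at jensen

namespace Coded

section

variable {A : Type*}

lemma extract_zero_natCast (x : ℤ → A) (n : ℕ) :
    extract x 0 n = List.ofFn fun j : Fin n => x j := by
  apply List.ext_getElem <;> simp [extract, ← List.map_eq_flatMap]

lemma length_extract_zero_natCast (x : ℤ → A) (n : ℕ) : (extract x 0 n).length = n := by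
  simp [extract_zero_natCast]

lemma listCylinder_eq_preimage (w : List A) :
    listCylinder w = (fun (x : ℤ → A) (j : Fin w.length) => x j) ⁻¹' {w.get} := by
  ext x
  rw [mem_preimage, mem_singleton_iff, ← List.ofFn_inj, List.ofFn_get, ← extract_zero_natCast]
  rfl

lemma measurableSet_listCylinder [MeasurableSpace A] [MeasurableSingletonClass A]
    (w : List A) : MeasurableSet (listCylinder w) := by
  rw [listCylinder_eq_preimage]
  exact measurable_pi_lambda _ (fun j => measurable_pi_apply _) (measurableSet_singleton _)

instance [Fintype A] (n : ℕ) : Fintype {l : List A // l.length = n} :=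
  inferInstanceAs (Fintype (List.Vector A n))

def initialWord (n : ℕ) (x : ℤ → A) : {l : List A // l.length = n} :=
  ⟨extract x 0 n, length_extract_zero_natCast x n⟩

lemma initialWord_preimage_singleton {n : ℕ} (w : {l : List A // l.length = n}) :
    initialWord n ⁻¹' {w} = listCylinder (w : List A) := by
  ext x
  obtain ⟨w, rfl⟩ := w
  exact Subtype.ext_iff

lemma sum_measure_listCylinder [Fintype A] [MeasurableSpace A] [MeasurableSingletonClass A]
    (μ : Measure (ℤ → A)) [IsProbabilityMeasure μ] (n : ℕ) :
    ∑ w : {l : List A // l.length = n}, μ (listCylinder w) = 1 := by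
  simp_rw [← initialWord_preimage_singleton]
  rw [sum_measure_preimage_singleton _ fun w _ => by
      simpa [initialWord_preimage_singleton] using measurableSet_listCylinder (w : List A),
    Finset.coe_univ, preimage_univ, measure_univ]

lemma measure_listCylinder_eq_zero [MeasurableSpace A] [MeasurableSingletonClass A]
    {μ : Measure (ℤ → A)} [IsProbabilityMeasure μ] {Y : Set (ℤ → A)} (hY : μ Y = 1)
    {w : List A} (hw : w ∉ langN Y w.length) : μ (listCylinder w) = 0 := by
  rw [← prob_compl_eq_one_iff (measurableSet_listCylinder w)]
  refine le_antisymm prob_le_one (hY ▸ measure_mono fun y hy hyw => hw ⟨rfl, y, hy, 0, ?_⟩)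
  rwa [zero_add]

lemma ncard_langN_le [Fintype A] (Y : Set (ℤ → A)) (n : ℕ) :
    (langN Y n).ncard ≤ Fintype.card A ^ n :=
  calc (langN Y n).ncard ≤ {l : List A | l.length = n}.ncard :=
        Set.ncard_le_ncard (fun _ hw => hw.1)
          (Set.finite_coe_iff.1 (inferInstanceAs (Finite {l : List A // l.length = n})))
    _ = Nat.card {l : List A // l.length = n} := (Nat.card_coe_set_eq _).symm
    _ = Fintype.card A ^ n := Nat.card_eq_fintype_card.trans (card_vector n)

lemma log_ncard_langN_div_le [Fintype A] (Y : Set (ℤ → A)) (n : ℕ) :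
    Real.log (langN Y n).ncard / n ≤ Real.log (Fintype.card A) := by
  rcases Nat.eq_zero_or_pos (langN Y n).ncard with h | h
  · rw [h, Nat.cast_zero, Real.log_zero, zero_div]
    exact Real.log_natCast_nonneg _
  rcases n.eq_zero_or_pos with rfl | hn
  · simpa using Real.log_natCast_nonneg _
  rw [div_le_iff₀ (by exact_mod_cast hn), mul_comm, ← Real.log_pow, ← Nat.cast_pow]
  exact Real.log_le_log (by exact_mod_cast h) (by exact_mod_cast ncard_langN_le Y n)

def cylinderEntropy [MeasurableSpace A] (μ : Measure (ℤ → A)) (n : ℕ) : ℝ :=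
  ∑' w : {l : List A // l.length = n}, Real.negMulLog (μ (listCylinder (w : List A))).toReal

lemma cylinderEntropy_nonneg [MeasurableSpace A] (μ : Measure (ℤ → A)) [IsProbabilityMeasure μ]
    (n : ℕ) : 0 ≤ cylinderEntropy μ n :=
  tsum_nonneg fun _ => Real.negMulLog_nonneg ENNReal.toReal_nonneg measureReal_le_one

lemma cylinderEntropy_le_log_ncard_langN [Fintype A] [MeasurableSpace A]
    [MeasurableSingletonClass A] {μ : Measure (ℤ → A)} [IsProbabilityMeasure μ]
    {Y : Set (ℤ → A)} (hY : μ Y = 1) (n : ℕ) :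
    cylinderEntropy μ n ≤ Real.log (langN Y n).ncard := by
  classical
  set F := Finset.univ.filter fun w : {l : List A // l.length = n} => (w : List A) ∈ langN Y n
  have hcard : (langN Y n).ncard = F.card := by
    have : langN Y n = Subtype.val '' (F : Set {l : List A // l.length = n}) := by
      ext l
      constructor
      · exact fun hl => ⟨⟨l, hl.1⟩, by simpa [F] using hl, rfl⟩
      · rintro ⟨w, hw, rfl⟩
        simpa [F] using hw
    rw [this, Set.ncard_image_of_injective _ Subtype.val_injective, Set.ncard_coe_finset]
  have hnull : ∀ w ∉ F, (μ (listCylinder (w : List A))).toReal = 0 := fun w hw => by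
    have hw' : (w : List A) ∉ langN Y (w : List A).length := by
      rw [w.2]
      simpa [F] using hw
    rw [measure_listCylinder_eq_zero hY hw', ENNReal.toReal_zero]
  rw [cylinderEntropy, tsum_fintype, ← Finset.sum_subset F.subset_univ fun w _ hw => by
      rw [hnull w hw, Real.negMulLog_zero], hcard]
  refine Real.sum_negMulLog_le_log_card F (fun _ _ => ENNReal.toReal_nonneg) ?_
  rw [Finset.sum_subset F.subset_univ fun w _ hw => hnull w hw,
    ← ENNReal.toReal_sum fun _ _ => measure_ne_top μ _, sum_measure_listCylinder, ENNReal.toReal_one]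

end

theorem entropy_le_language_growth_general {A : Type*} [Fintype A] [MeasurableSpace A]
    [MeasurableSingletonClass A] (X : Set (ℤ → A)) (Y : Set (ℤ → A))
    (μ : Measure (ℤ → A)) (hμ : MemM X μ) (hY : μ Y = 1) :
    measEntropy μ ≤ hSet Y := by
  have : IsProbabilityMeasure μ := hμ.1.1
  refine limsup_le_limsup (Eventually.of_forall fun n => ?_) ?_ ?_
  · exact div_le_div_of_nonneg_right (cylinderEntropy_le_log_ncard_langN hY n) n.cast_nonneg
  · exact isCoboundedUnder_le_of_le atTop fun n =>
      div_nonneg (cylinderEntropy_nonneg μ n) n.cast_nonneg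
  · exact isBoundedUnder_of ⟨_, log_ncard_langN_div_le Y⟩

/-- **Lemma.** Let `X` be a shift space over a finite alphabet and let `Y ⊆ X` be a
shift-invariant (not necessarily closed) set. Then every shift-invariant Borel probability
measure `μ` on `X` with `μ(Y) = 1` satisfies `h_σ(μ) ≤ h(Y)`, where
`h(Y) = limsup_n (1/n) log |L_n(Y)|`. -/
theorem entropy_le_language_growth {A : Type*} [Fintype A] [TopologicalSpace A]
    [DiscreteTopology A] [MeasurableSpace A] [MeasurableSingletonClass A]
    (X : Set (ℤ → A)) (hX : IsSubshift X)
    (Y : Set (ℤ → A)) (hYX : Y ⊆ X) (hinv : shift '' Y = Y)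
    (μ : Measure (ℤ → A)) (hμ : MemM X μ) (hY : μ Y = 1) :
    measEntropy μ ≤ hSet Y :=
  entropy_le_language_growth_general X Y μ hμ hY

end Coded
end
end
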